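/- Let α, β > −1 and n ≥ 1. Then the structure relation (1−x²) (d/dx) P_n^{(α,β)}(x) − (1/2)(α−β+(α+β+2)x) P_n^{(α,β)}(x) = −[(n+1)(n+α+β+1)/(2n+α+β+1)] P_{n+1}^{(α,β)}(x) + [(n+α)(n+β)/(2n+α+β+1)] P_{n−1}^{(α,β)}(x) holds identically in x. -/

import Mathlib

open Polynomial

/-- Generalized binomial coefficient `C(a, j) = a(a-1)⋯(a-j+1)/j!` for real `a`. -/
noncomputable def genBinom (a : ℝ) (j : ℕ) : ℝ :=
  (∏ i ∈ Finset.range j, (a - i)) / (j.factorial : ℝ)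

/-- The Jacobi polynomial
`P_n^{(α,β)}(x) = Σ_{k=0}^{n} C(n+α, n-k) C(n+β, k) ((x-1)/2)^k ((x+1)/2)^{n-k}`. -/
noncomputable def jacobiP (α β : ℝ) (n : ℕ) : ℝ[X] :=
  ∑ k ∈ Finset.range (n + 1),
    C (genBinom ((n : ℝ) + α) (n - k) * genBinom ((n : ℝ) + β) k) *
      (C (1 / 2) * (X - 1)) ^ k * (C (1 / 2) * (X + 1)) ^ (n - k)

/-!
Write `u = (x - 1) / 2` and `v = (x + 1) / 2`, so that `v - u = 1`, `x = u + v` and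
`1 - x² = -4uv`. The coefficient of `uⁱ vʲ` in `P_n^{(α,β)}` is
`(α+1)_n (β+1)_n · wα(i) wβ(j)` with `wα(i) = 1 / (i! (α+1)_i)`, and since
`i (i + α) wα(i) = wα(i - 1)`, multiplying a form `Σ_{i+j=N} q(i,j) wα(i) wβ(j) uⁱ vʲ` by `u`
(or `v`) gives a form of degree `N + 1` with `q(i, j)` replaced by `i (i + α) q(i - 1, j)`
(or `j (j + β) q(i, j - 1)`).
Both sides of the relation, with `P_{n-1}` first multiplied by `(v - u)² = 1`, are therefore
forms of degree `n + 1`, and the relation reduces to a polynomial identity in `i, j, α, β` on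
`i + j = n + 1`.
-/

open Finset Nat

lemma genBinom_mul_factorial_mul_ascPochhammer_eval (α : ℝ) (i j : ℕ) :
    genBinom ((i + j : ℕ) + α) j * (j ! * (ascPochhammer ℝ i).eval (α + 1)) =
      (ascPochhammer ℝ (i + j)).eval (α + 1) := by
  have hdesc : genBinom ((i + j : ℕ) + α) j * j ! = (ascPochhammer ℝ j).eval (α + 1 + i) := by
    rw [genBinom, div_mul_cancel₀ _ (by positivity), ← descPochhammer_eval_eq_prod_range,
      descPochhammer_eval_eq_ascPochhammer]
    push_cast
    congr 1
    ring
  rw [← mul_assoc, hdesc, ← ascPochhammer_mul, eval_mul, eval_comp]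
  simp only [eval_add, eval_X, eval_natCast]
  ring

noncomputable def jacobiWeight (α : ℝ) (k : ℕ) : ℝ :=
  ((k ! : ℝ) * (ascPochhammer ℝ k).eval (α + 1))⁻¹

lemma ascPochhammer_eval_add_one_pos {α : ℝ} (hα : -1 < α) (k : ℕ) :
    0 < (ascPochhammer ℝ k).eval (α + 1) :=
  ascPochhammer_pos k _ (by linarith)

lemma succ_mul_jacobiWeight_succ {α : ℝ} (hα : -1 < α) (k : ℕ) :
    ((k : ℝ) + 1) * ((k : ℝ) + 1 + α) * jacobiWeight α (k + 1) = jacobiWeight α k := by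
  have hA := ascPochhammer_eval_add_one_pos hα k
  have hk : α + 1 + k ≠ 0 := by have : (0 : ℝ) ≤ k := k.cast_nonneg; linarith
  rw [jacobiWeight, jacobiWeight, ascPochhammer_succ_eval, Nat.factorial_succ]
  push_cast
  field_simp
  ring

lemma genBinom_mul_genBinom_eq_jacobiWeight {α β : ℝ} (hα : -1 < α) (hβ : -1 < β) (i j : ℕ) :
    genBinom ((i + j : ℕ) + α) j * genBinom ((i + j : ℕ) + β) i =
      (ascPochhammer ℝ (i + j)).eval (α + 1) * (ascPochhammer ℝ (i + j)).eval (β + 1) *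
        (jacobiWeight α i * jacobiWeight β j) := by
  have hAα := ascPochhammer_eval_add_one_pos hα i
  have hAβ := ascPochhammer_eval_add_one_pos hβ j
  rw [← genBinom_mul_factorial_mul_ascPochhammer_eval α i j, add_comm i j,
    ← genBinom_mul_factorial_mul_ascPochhammer_eval β j i, jacobiWeight, jacobiWeight]
  field_simp

lemma jacobiP_eq_sum_antidiagonal {α β : ℝ} (hα : -1 < α) (hβ : -1 < β) (n : ℕ) :
    jacobiP α β n = ∑ p ∈ antidiagonal n,
      C ((ascPochhammer ℝ n).eval (α + 1) * (ascPochhammer ℝ n).eval (β + 1) *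
          (jacobiWeight α p.1 * jacobiWeight β p.2)) *
        ((C (1 / 2) * (X - 1)) ^ p.1 * (C (1 / 2) * (X + 1)) ^ p.2) := by
  rw [jacobiP, Finset.Nat.sum_antidiagonal_eq_sum_range_succ_mk]
  refine sum_congr rfl fun k hk => ?_
  have hkn : k + (n - k) = n := Nat.add_sub_cancel' (Nat.lt_succ_iff.mp (mem_range.mp hk))
  have hcoeff := genBinom_mul_genBinom_eq_jacobiWeight hα hβ k (n - k)
  rw [hkn] at hcoeff
  rw [hcoeff, mul_assoc]

/-- `q` takes real arguments so that shifted weights such as `q (a - 1) b` are not truncated. -/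
noncomputable def jacobiForm (α β : ℝ) (N : ℕ) (q : ℝ → ℝ → ℝ) (x : ℝ) : ℝ :=
  ∑ p ∈ antidiagonal N, q p.1 p.2 * (jacobiWeight α p.1 * jacobiWeight β p.2) *
    ((x - 1) / 2) ^ p.1 * ((x + 1) / 2) ^ p.2

section jacobiForm

variable {α β : ℝ} {N : ℕ} {x : ℝ}

lemma jacobiForm_congr {q r : ℝ → ℝ → ℝ} (h : ∀ i j : ℕ, i + j = N → q i j = r i j) :
    jacobiForm α β N q x = jacobiForm α β N r x :=
  sum_congr rfl fun p hp => by rw [h p.1 p.2 (mem_antidiagonal.mp hp)]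

lemma jacobiForm_add (q r : ℝ → ℝ → ℝ) :
    jacobiForm α β N q x + jacobiForm α β N r x =
      jacobiForm α β N (fun a b => q a b + r a b) x := by
  simp only [jacobiForm, ← sum_add_distrib, add_mul]

lemma jacobiForm_sub (q r : ℝ → ℝ → ℝ) :
    jacobiForm α β N q x - jacobiForm α β N r x =
      jacobiForm α β N (fun a b => q a b - r a b) x := by
  simp only [jacobiForm, ← sum_sub_distrib, sub_mul]

lemma mul_jacobiForm (c : ℝ) (q : ℝ → ℝ → ℝ) :
    c * jacobiForm α β N q x = jacobiForm α β N (fun a b => c * q a b) x := by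
  simp only [jacobiForm, mul_sum, mul_assoc]

lemma sub_one_div_two_mul_jacobiForm (hα : -1 < α) (q : ℝ → ℝ → ℝ) :
    (x - 1) / 2 * jacobiForm α β N q x =
      jacobiForm α β (N + 1) (fun a b => a * (a + α) * q (a - 1) b) x := by
  rw [jacobiForm, jacobiForm, Finset.Nat.sum_antidiagonal_succ, mul_sum]
  simp only [Nat.cast_zero, zero_mul, zero_add, Nat.cast_add_one, add_sub_cancel_right]
  refine sum_congr rfl fun p _ => ?_
  rw [← succ_mul_jacobiWeight_succ hα p.1]
  ring

lemma add_one_div_two_mul_jacobiForm (hβ : -1 < β) (q : ℝ → ℝ → ℝ) :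
    (x + 1) / 2 * jacobiForm α β N q x =
      jacobiForm α β (N + 1) (fun a b => b * (b + β) * q a (b - 1)) x := by
  rw [jacobiForm, jacobiForm, Finset.Nat.sum_antidiagonal_succ', mul_sum]
  simp only [Nat.cast_zero, zero_mul, zero_add, Nat.cast_add_one, add_sub_cancel_right]
  refine sum_congr rfl fun p _ => ?_
  rw [← succ_mul_jacobiWeight_succ hβ p.2]
  ring

end jacobiForm

lemma jacobiForm_one_eq_jacobiForm_add_two {α β : ℝ} (hα : -1 < α) (hβ : -1 < β) (N : ℕ)
    (x : ℝ) :
    jacobiForm α β N (fun _ _ => 1) x =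
      jacobiForm α β (N + 1 + 1) (fun a b => b * (b + β) * (b - 1) * (b - 1 + β) -
        2 * (a * (a + α) * b * (b + β)) + a * (a + α) * (a - 1) * (a - 1 + α)) x := by
  set u := (x - 1) / 2
  set v := (x + 1) / 2
  calc jacobiForm α β N (fun _ _ => 1) x
      = (v - u) ^ 2 * jacobiForm α β N (fun _ _ => 1) x := by ring
    _ = v * (v * jacobiForm α β N (fun _ _ => 1) x)
          - 2 * (u * (v * jacobiForm α β N (fun _ _ => 1) x))
          + u * (u * jacobiForm α β N (fun _ _ => 1) x) := by ring
    _ = _ := by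
      simp only [u, v, add_one_div_two_mul_jacobiForm hβ, sub_one_div_two_mul_jacobiForm hα,
        mul_jacobiForm, jacobiForm_sub, jacobiForm_add]
      exact jacobiForm_congr fun i j _ => by ring

lemma one_sub_sq_mul_eval_derivative_pow_mul_pow (i j : ℕ) (x : ℝ) :
    (1 - x ^ 2) * (derivative ((C (1 / 2) * (X - 1)) ^ i * (C (1 / 2) * (X + 1)) ^ j)).eval x =
      -2 * (i * ((x - 1) / 2) ^ i * ((x + 1) / 2) ^ (j + 1) +
        j * ((x - 1) / 2) ^ (i + 1) * ((x + 1) / 2) ^ j) := by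
  simp only [derivative_mul, derivative_pow, derivative_C, derivative_X, derivative_sub,
    derivative_add, derivative_one, eval_add, eval_mul, eval_pow, eval_C, eval_X, eval_sub,
    eval_one, zero_mul, zero_add, sub_zero, add_zero, mul_one]
  rcases i with _ | i <;> rcases j with _ | j <;>
    simp only [Nat.cast_zero, Nat.cast_succ, Nat.add_sub_cancel] <;> ring

lemma eval_jacobiP {α β : ℝ} (hα : -1 < α) (hβ : -1 < β) (n : ℕ) (x : ℝ) :
    (jacobiP α β n).eval x =
      (ascPochhammer ℝ n).eval (α + 1) * (ascPochhammer ℝ n).eval (β + 1) *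
        jacobiForm α β n (fun _ _ => 1) x := by
  rw [jacobiP_eq_sum_antidiagonal hα hβ, eval_finsetSum, jacobiForm, mul_sum]
  refine sum_congr rfl fun p _ => ?_
  simp only [eval_mul, eval_pow, eval_C, eval_sub, eval_add, eval_X, eval_one]
  ring

lemma jacobi_structure_lhs_eq {α β : ℝ} (hα : -1 < α) (hβ : -1 < β) (n : ℕ) (x : ℝ) :
    (1 - x ^ 2) * (derivative (jacobiP α β n)).eval x -
        (1 / 2) * (α - β + (α + β + 2) * x) * (jacobiP α β n).eval x =
      -((ascPochhammer ℝ n).eval (α + 1) * (ascPochhammer ℝ n).eval (β + 1)) *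
        jacobiForm α β (n + 1) (fun a b => b * (b + β) * (2 * a + α + 1) +
          a * (a + α) * (2 * b + β + 1)) x := by
  have hsum : (1 - x ^ 2) * (derivative (jacobiP α β n)).eval x -
        (1 / 2) * (α - β + (α + β + 2) * x) * (jacobiP α β n).eval x =
      -((ascPochhammer ℝ n).eval (α + 1) * (ascPochhammer ℝ n).eval (β + 1)) *
        ((x + 1) / 2 * jacobiForm α β n (fun a _ => 2 * a + α + 1) x +
          (x - 1) / 2 * jacobiForm α β n (fun _ b => 2 * b + β + 1) x) := by
    rw [eval_jacobiP hα hβ, jacobiP_eq_sum_antidiagonal hα hβ, derivative_sum, eval_finsetSum,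
      mul_sum]
    simp only [jacobiForm, mul_sum, ← sum_add_distrib, ← sum_sub_distrib]
    refine sum_congr rfl fun p _ => ?_
    rw [derivative_C_mul, eval_mul, eval_C, mul_left_comm,
      one_sub_sq_mul_eval_derivative_pow_mul_pow]
    ring
  rw [hsum, add_one_div_two_mul_jacobiForm hβ, sub_one_div_two_mul_jacobiForm hα,
    jacobiForm_add]

lemma jacobiForm_structure_identity (α β : ℝ) (n : ℕ) (x : ℝ) :
    (2 * n + α + β + 1) * jacobiForm α β (n + 1) (fun a b => b * (b + β) * (2 * a + α + 1) +
        a * (a + α) * (2 * b + β + 1)) x =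
      (n + 1) * (n + α + β + 1) * (n + 1 + α) * (n + 1 + β) *
          jacobiForm α β (n + 1) (fun _ _ => 1) x -
        jacobiForm α β (n + 1) (fun a b => b * (b + β) * (b - 1) * (b - 1 + β) -
          2 * (a * (a + α) * b * (b + β)) + a * (a + α) * (a - 1) * (a - 1 + α)) x := by
  rw [mul_jacobiForm, mul_jacobiForm, jacobiForm_sub]
  refine jacobiForm_congr fun a b hab => ?_
  have hn : (n : ℝ) = a + b - 1 := by
    rw [eq_sub_iff_add_eq, ← Nat.cast_add_one, ← hab, Nat.cast_add]
  rw [hn]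
  ring

/-- **Structure relation for Jacobi polynomials**, equation (3.8) of the paper. -/
theorem jacobi_structure_relation (α β : ℝ) (hα : -1 < α) (hβ : -1 < β)
    (n : ℕ) (hn : 1 ≤ n) (x : ℝ) :
    (1 - x ^ 2) * (derivative (jacobiP α β n)).eval x -
        (1 / 2) * (α - β + (α + β + 2) * x) * (jacobiP α β n).eval x =
      -(((n : ℝ) + 1) * ((n : ℝ) + α + β + 1) / (2 * (n : ℝ) + α + β + 1)) *
          (jacobiP α β (n + 1)).eval x +
        (((n : ℝ) + α) * ((n : ℝ) + β) / (2 * (n : ℝ) + α + β + 1)) *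
          (jacobiP α β (n - 1)).eval x := by
  obtain ⟨m, rfl⟩ : ∃ m, n = m + 1 := ⟨n - 1, by omega⟩
  have hD : 2 * ((m + 1 : ℕ) : ℝ) + α + β + 1 ≠ 0 := by
    have : (0 : ℝ) ≤ m := m.cast_nonneg
    push_cast
    linarith
  rw [jacobi_structure_lhs_eq hα hβ,
    eq_div_of_mul_eq hD ((mul_comm _ _).trans (jacobiForm_structure_identity α β (m + 1) x)),
    eval_jacobiP hα hβ, eval_jacobiP hα hβ, Nat.add_sub_cancel,
    jacobiForm_one_eq_jacobiForm_add_two hα hβ m]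
  simp only [ascPochhammer_succ_eval]
  push_cast
  ring
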